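/- Let q be an odd prime power, m a positive integer, s a positive integer coprime to m, and t an integer with 0 ≤ t ≤ (m-1)/2. For λ = (λ_0,…,λ_t) ∈ F_{q^m}^{t+1}, define the symmetric bilinear form B_λ(x,y) = Tr(λ_0 x y + Σ_{j=1}^{t} λ_j (x^{q^{sj}} y + x y^{q^{sj}})) on F_{q^m} over F_q. If λ ≠ 0, then B_λ has rank at least m - 2t. -/

import Mathlib

/-- The symmetric bilinear form
`B_λ(x,y) = Tr(λ_0 x y + ∑_{j=1}^{t} λ_j (x^{q^{sj}} y + x y^{q^{sj}}))` on `F_{q^m}`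
over `F_q`, where `Tr` is the field trace. -/
noncomputable def Bform (F K : Type*) [Field F] [Field K] [Algebra F K]
    (q s t : ℕ) (l : Fin (t + 1) → K) (x y : K) : F :=
  Algebra.trace F K
    (l 0 * (x * y) +
      ∑ j ∈ Finset.univ.filter (fun j : Fin (t + 1) => (j : ℕ) ≠ 0),
        l j * (x ^ (q ^ (s * (j : ℕ))) * y + x * y ^ (q ^ (s * (j : ℕ)))))

/-!
Let `σ = Frob ^ s`. As `gcd(s, m) = 1`, `σ` generates `Gal(F_{q^m}/F_q)`, so its fixed field is
`F_q`. Moving `σʲ` across the trace, `Tr(a · σʲ y) = Tr(σ⁻ʲ a · y)`, and using nondegeneracy of the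
trace form, every `x` in the radical of `B_λ` satisfies `L x = 0`, where
`L x = λ₀ x + ∑ⱼ (λⱼ σʲ x + σ⁻ʲ (λⱼ x))`; and `σᵗ ∘ L` is a nonzero `σ`-polynomial
`∑_{k ≤ 2t} bₖ σᵏ`. A subspace killed by a nonzero `σ`-polynomial of degree `n` has dimension at
most `n` over the fixed field of `σ`: after rescaling one of its vectors to `1`, the polynomial
factors as `L' ∘ (σ - 1)`, and `σ - 1` has a one-dimensional kernel.
-/

open Polynomial Module

theorem Submodule.finrank_le_finrank_map_add_finrank_ker {k V V₂ : Type*} [DivisionRing k]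
    [AddCommGroup V] [Module k V] [AddCommGroup V₂] [Module k V₂] [FiniteDimensional k V]
    (f : V →ₗ[k] V₂) (W : Submodule k V) :
    finrank k W ≤ finrank k (W.map f) + finrank k (LinearMap.ker f) := by
  rw [← (f.domRestrict W).finrank_range_add_finrank_ker, LinearMap.range_domRestrict,
    LinearMap.ker_domRestrict, ← Submodule.finrank_map_subtype_eq]
  gcongr
  exact Submodule.finrank_mono (Submodule.map_comap_le _ _)

noncomputable section

namespace AlgEquiv

variable {F K : Type*} [Field F] [Field K] [Algebra F K] (σ : K ≃ₐ[F] K)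

/-- `p = ∑ aₖ Xᵏ` encodes the `σ`-polynomial `x ↦ ∑ aₖ σᵏ x`. -/
def skewEval (x : K) : K[X] →ₗ[K] K :=
  lsum fun k => LinearMap.mulRight K ((σ ^ k) x)

def skewTwist (v : K) : K[X] →ₗ[K] K[X] :=
  lsum fun k => monomial k ∘ₗ LinearMap.mulRight K ((σ ^ k) v)

variable {σ}

@[simp]
theorem skewEval_monomial (x a : K) (k : ℕ) : σ.skewEval x (monomial k a) = a * (σ ^ k) x := by
  simp [skewEval, sum_monomial_index]

theorem skewEval_C_mul_X_pow (x a : K) (k : ℕ) : σ.skewEval x (C a * X ^ k) = a * (σ ^ k) x := by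
  rw [C_mul_X_pow_eq_monomial, skewEval_monomial]

@[simp]
theorem skewTwist_monomial (v a : K) (k : ℕ) :
    σ.skewTwist v (monomial k a) = monomial k (a * (σ ^ k) v) := by
  simp [skewTwist, sum_monomial_index]

theorem skewEval_sub (x y : K) (p : K[X]) :
    σ.skewEval (x - y) p = σ.skewEval x p - σ.skewEval y p := by
  induction p using Polynomial.induction_on' with
  | add p q hp hq => simp only [map_add, hp, hq]; ring
  | monomial k a => simp [mul_sub]

theorem skewEval_X_mul (x : K) (p : K[X]) : σ.skewEval x (X * p) = σ.skewEval (σ x) p := by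
  induction p using Polynomial.induction_on' with
  | add p q hp hq => simp only [mul_add, map_add, hp, hq]
  | monomial k a => simp [X_mul_monomial, pow_succ]

theorem skewEval_X_sub_C_one_mul (x : K) (p : K[X]) :
    σ.skewEval x ((X - C 1) * p) = σ.skewEval (σ x - x) p := by
  rw [sub_mul, C_1, one_mul, map_sub, skewEval_X_mul, skewEval_sub]

theorem skewEval_one (p : K[X]) : σ.skewEval 1 p = p.eval 1 := by
  simp [skewEval, eval_eq_sum]

theorem skewEval_skewTwist (v x : K) (p : K[X]) :
    σ.skewEval x (σ.skewTwist v p) = σ.skewEval (v * x) p := by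
  induction p using Polynomial.induction_on' with
  | add p q hp hq => simp only [map_add, hp, hq]
  | monomial k a => simp [mul_assoc]

theorem coeff_skewTwist (v : K) (p : K[X]) (k : ℕ) :
    (σ.skewTwist v p).coeff k = p.coeff k * (σ ^ k) v := by
  induction p using Polynomial.induction_on' with
  | add p q hp hq => simp only [map_add, coeff_add, hp, hq, add_mul]
  | monomial n a => rcases eq_or_ne n k with rfl | h <;> simp [coeff_monomial, *]

theorem natDegree_skewTwist_le (v : K) (p : K[X]) : (σ.skewTwist v p).natDegree ≤ p.natDegree :=
  natDegree_le_iff_coeff_eq_zero.2 fun _ hk => by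
    rw [coeff_skewTwist, coeff_eq_zero_of_natDegree_lt hk, zero_mul]

theorem skewTwist_ne_zero {v : K} (hv : v ≠ 0) {p : K[X]} (hp : p ≠ 0) : σ.skewTwist v p ≠ 0 :=
  fun h => by
    have h' := congr_arg (coeff · p.natDegree) h
    simp only [coeff_skewTwist, coeff_zero] at h'
    exact mul_ne_zero (leadingCoeff_ne_zero.2 hp) ((map_ne_zero (σ ^ p.natDegree)).2 hv) h'

theorem exists_skewEval_eq_skewEval_sub {v : K} (hv : v ≠ 0) {p : K[X]} (hp : p ≠ 0)
    (hpv : σ.skewEval v p = 0) : ∃ e : K[X], e ≠ 0 ∧ e.natDegree < p.natDegree ∧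
      ∀ x, σ.skewEval (σ (v⁻¹ * x) - v⁻¹ * x) e = σ.skewEval x p := by
  set c := σ.skewTwist v p
  have hc : c.IsRoot 1 := by
    rwa [IsRoot.def, ← skewEval_one (σ := σ), skewEval_skewTwist, mul_one]
  set e := c /ₘ (X - C 1)
  have hce : (X - C 1) * e = c := mul_divByMonic_eq_iff_isRoot.mpr hc
  have he : e ≠ 0 := by
    rintro he
    rw [he, mul_zero] at hce
    exact skewTwist_ne_zero hv hp hce.symm
  refine ⟨e, he, ?_, fun x => ?_⟩
  · calc e.natDegree < c.natDegree := by
          rw [← hce, natDegree_mul (X_sub_C_ne_zero 1) he, natDegree_X_sub_C]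
          omega
      _ ≤ p.natDegree := natDegree_skewTwist_le v p
  · rw [← skewEval_X_sub_C_one_mul, hce, skewEval_skewTwist, mul_inv_cancel_left₀ hv]

theorem finrank_le_natDegree_of_skewEval_eq_zero [FiniteDimensional F K]
    (hσ : ∀ x, σ x = x → x ∈ Set.range (algebraMap F K)) {p : K[X]} (hp : p ≠ 0)
    {W : Submodule F K} (hW : ∀ x ∈ W, σ.skewEval x p = 0) : finrank F W ≤ p.natDegree := by
  induction hn : p.natDegree using Nat.strong_induction_on generalizing p W with
  | _ n ih =>
  obtain rfl | hW0 := eq_or_ne W ⊥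
  · simp
  obtain ⟨v, hvW, hv⟩ := Submodule.exists_mem_ne_zero_of_ne_bot hW0
  obtain ⟨e, he, hdeg, hT⟩ := exists_skewEval_eq_skewEval_sub hv hp (hW v hvW)
  let T : K →ₗ[F] K := (σ.toLinearMap - LinearMap.id) ∘ₗ LinearMap.mulLeft F v⁻¹
  have hker : LinearMap.ker T ≤ F ∙ v := fun x hx => by
    obtain ⟨a, ha⟩ := hσ (v⁻¹ * x) (sub_eq_zero.mp hx)
    rw [Submodule.mem_span_singleton]
    exact ⟨a, by rw [Algebra.smul_def, ha, mul_comm, mul_inv_cancel_left₀ hv]⟩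
  calc finrank F W ≤ finrank F (W.map T) + finrank F (LinearMap.ker T) :=
        W.finrank_le_finrank_map_add_finrank_ker T
    _ ≤ e.natDegree + 1 := by
        gcongr
        · exact ih _ (hn ▸ hdeg) he (fun _ ⟨x, hx, hTx⟩ => hTx ▸ (hT x).trans (hW x hx)) rfl
        · exact (Submodule.finrank_mono hker).trans (finrank_span_singleton hv).le
    _ ≤ n := hn ▸ hdeg

variable (σ)

def twistedTraceForm {t : ℕ} (l : Fin (t + 1) → K) (x y : K) : F :=
  Algebra.trace F K (l 0 * (x * y) + ∑ j ∈ Finset.univ.filter (fun j : Fin (t + 1) => (j : ℕ) ≠ 0),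
    l j * ((σ ^ (j : ℕ)) x * y + x * (σ ^ (j : ℕ)) y))

def radicalMap {t : ℕ} (l : Fin (t + 1) → K) (x : K) : K :=
  l 0 * x + ∑ j ∈ Finset.univ.filter (fun j : Fin (t + 1) => (j : ℕ) ≠ 0),
    (l j * (σ ^ (j : ℕ)) x + (σ ^ (j : ℕ))⁻¹ (l j * x))

def radicalPoly {t : ℕ} (l : Fin (t + 1) → K) : K[X] :=
  C ((σ ^ t) (l 0)) * X ^ t + ∑ j ∈ Finset.univ.filter (fun j : Fin (t + 1) => (j : ℕ) ≠ 0),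
    (C ((σ ^ t) (l j)) * X ^ (t + j) + C ((σ ^ (t - j)) (l j)) * X ^ (t - j))

variable {σ} {t : ℕ} (l : Fin (t + 1) → K)

theorem trace_mul_apply (τ : K ≃ₐ[F] K) (a y : K) :
    Algebra.trace F K (a * τ y) = Algebra.trace F K (τ⁻¹ a * y) := by
  rw [← Algebra.trace_eq_of_algEquiv τ⁻¹, map_mul, ← mul_apply, inv_mul_cancel, one_apply]

theorem twistedTraceForm_eq_trace_radicalMap_mul (x y : K) :
    σ.twistedTraceForm l x y = Algebra.trace F K (σ.radicalMap l x * y) := by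
  simp only [twistedTraceForm, radicalMap, add_mul, Finset.sum_mul, map_add, map_sum, mul_add]
  congr 1
  · ring_nf
  refine Finset.sum_congr rfl fun j _ => ?_
  rw [← mul_assoc, ← mul_assoc, trace_mul_apply]

theorem radicalMap_eq_zero [FiniteDimensional F K] [Algebra.IsSeparable F K] {x : K}
    (hx : ∀ y, σ.twistedTraceForm l x y = 0) : σ.radicalMap l x = 0 :=
  (traceForm_nondegenerate F K).1 _ fun y => by
    rw [Algebra.traceForm_apply, ← twistedTraceForm_eq_trace_radicalMap_mul, hx]

theorem skewEval_radicalPoly (x : K) :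
    σ.skewEval x (σ.radicalPoly l) = (σ ^ t) (σ.radicalMap l x) := by
  simp only [radicalPoly, radicalMap, map_add, map_sum, skewEval_C_mul_X_pow, map_mul]
  congr 1
  refine Finset.sum_congr rfl fun j _ => ?_
  simp only [pow_add, pow_sub σ (Nat.le_of_lt_succ j.isLt), mul_apply]

theorem natDegree_radicalPoly_le : (σ.radicalPoly l).natDegree ≤ 2 * t := by
  unfold radicalPoly
  refine natDegree_add_le_of_degree_le ((natDegree_C_mul_X_pow_le _ _).trans (by omega))
    (natDegree_sum_le_of_forall_le _ _ fun j _ => natDegree_add_le_of_degree_le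
      ((natDegree_C_mul_X_pow_le _ _).trans ?_) ((natDegree_C_mul_X_pow_le _ _).trans (by omega)))
  have := j.isLt
  omega

theorem coeff_radicalPoly (j : Fin (t + 1)) : (σ.radicalPoly l).coeff (t + j) = (σ ^ t) (l j) := by
  have hlow : ∀ i ∈ Finset.univ.filter (fun i : Fin (t + 1) => (i : ℕ) ≠ 0),
      (C ((σ ^ (t - i)) (l i)) * X ^ (t - i)).coeff (t + j) = 0 := fun i hi => by
    rw [Finset.mem_filter] at hi
    rw [coeff_C_mul_X_pow, if_neg (by omega)]
  simp only [radicalPoly, coeff_add, finsetSum_coeff, Finset.sum_add_distrib]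
  rw [Finset.sum_eq_zero hlow, add_zero]
  simp only [coeff_C_mul_X_pow, add_eq_left, add_right_inj, Fin.val_inj,
    Finset.sum_ite_eq, Finset.mem_filter, Finset.mem_univ, true_and, Fin.val_eq_zero_iff]
  rcases eq_or_ne j 0 with rfl | hj <;> simp [*]

theorem radicalPoly_ne_zero (hl : l ≠ 0) : σ.radicalPoly l ≠ 0 := fun h => by
  obtain ⟨j, hj⟩ := Function.ne_iff.mp hl
  have := coeff_radicalPoly (σ := σ) l j
  rw [h, coeff_zero, eq_comm, map_eq_zero_iff _ (σ ^ t).injective] at this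
  exact hj this

theorem finrank_le_of_twistedTraceForm_eq_zero [FiniteDimensional F K] [Algebra.IsSeparable F K]
    (hσ : ∀ x, σ x = x → x ∈ Set.range (algebraMap F K)) (hl : l ≠ 0) {W : Submodule F K}
    (hW : ∀ x ∈ W, ∀ y, σ.twistedTraceForm l x y = 0) : finrank F W ≤ 2 * t :=
  (finrank_le_natDegree_of_skewEval_eq_zero hσ (radicalPoly_ne_zero l hl) fun x hx => by
    rw [skewEval_radicalPoly, radicalMap_eq_zero l (hW x hx), map_zero]).trans
    (natDegree_radicalPoly_le l)

end AlgEquiv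

end

theorem IsGalois.mem_range_algebraMap_of_apply_eq_self {F K : Type*} [Field F] [Field K]
    [Algebra F K] [FiniteDimensional F K] [IsGalois F K] {σ : Gal(K/F)}
    (hσ : Subgroup.zpowers σ = ⊤) {x : K} (hx : σ x = x) : x ∈ Set.range (algebraMap F K) := by
  have hfix : Subgroup.zpowers σ ≤ MulAction.stabilizer Gal(K/F) x := Subgroup.zpowers_le.mpr hx
  rw [hσ] at hfix
  exact (IsGalois.mem_range_algebraMap_iff_fixed x).2 fun f => hfix (Subgroup.mem_top f)

namespace FiniteField

variable {F K : Type*} [Field F] [Field K] [Fintype F] [Finite K] [Algebra F K]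

theorem frobeniusAlgEquivOfAlgebraic_pow_apply (n : ℕ) (x : K) :
    (frobeniusAlgEquivOfAlgebraic F K ^ n) x = x ^ Fintype.card F ^ n := by
  rw [AlgEquiv.coe_pow, coe_frobeniusAlgEquivOfAlgebraic_iterate]

theorem zpowers_frobeniusAlgEquivOfAlgebraic_pow {s : ℕ} (hs : s.Coprime (finrank F K)) :
    Subgroup.zpowers (frobeniusAlgEquivOfAlgebraic F K ^ s) = ⊤ := by
  refine Subgroup.eq_top_of_card_eq _ ?_
  rw [Nat.card_zpowers, IsGalois.card_aut_eq_finrank,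
    Nat.Coprime.orderOf_pow (by rwa [orderOf_frobeniusAlgEquivOfAlgebraic, Nat.coprime_comm]),
    orderOf_frobeniusAlgEquivOfAlgebraic]

end FiniteField

theorem Bform_eq_twistedTraceForm (F K : Type*) [Field F] [Field K] [Fintype F] [Finite K]
    [Algebra F K] (s t : ℕ) (l : Fin (t + 1) → K) :
    Bform F K (Fintype.card F) s t l =
      (FiniteField.frobeniusAlgEquivOfAlgebraic F K ^ s).twistedTraceForm l := by
  ext x y
  simp only [Bform, AlgEquiv.twistedTraceForm, ← pow_mul,
    FiniteField.frobeniusAlgEquivOfAlgebraic_pow_apply]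

theorem Bform_rank_ge_general (q m s t : ℕ)
    (F K : Type*) [Field F] [Field K] [Fintype F] [Fintype K] [Algebra F K]
    (hF : Fintype.card F = q)
    (hm : Module.finrank F K = m) (hsm : Nat.gcd s m = 1)
    (l : Fin (t + 1) → K) (hl : l ≠ 0) :
    ∀ W : Submodule F K, (∀ x ∈ W, ∀ y : K, Bform F K q s t l x y = 0) →
      Module.finrank F W ≤ 2 * t := by
  intro W hW
  subst hF hm
  rw [Bform_eq_twistedTraceForm] at hW
  exact AlgEquiv.finrank_le_of_twistedTraceForm_eq_zero l
    (fun _ => IsGalois.mem_range_algebraMap_of_apply_eq_self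
      (FiniteField.zpowers_frobeniusAlgEquivOfAlgebraic_pow hsm)) hl hW

/-- Let `q` be an odd prime power, `s` a positive integer coprime to `m`,
and `0 ≤ t ≤ (m-1)/2`. If `λ ≠ 0`, then the symmetric bilinear form `B_λ` on
`F_{q^m}` over `F_q` has rank at least `m - 2t`; equivalently, every `F_q`-subspace
contained in the radical of `B_λ` has dimension at most `2t`. -/
theorem Bform_rank_ge (q m s t : ℕ)
    (F K : Type*) [Field F] [Field K] [Fintype F] [Fintype K] [Algebra F K]
    (hF : Fintype.card F = q) (hodd : Odd q)
    (hm : Module.finrank F K = m) (hs : 0 < s) (hsm : Nat.gcd s m = 1)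
    (ht : 2 * t + 1 ≤ m)
    (l : Fin (t + 1) → K) (hl : l ≠ 0) :
    ∀ W : Submodule F K, (∀ x ∈ W, ∀ y : K, Bform F K q s t l x y = 0) →
      Module.finrank F W ≤ 2 * t :=
  Bform_rank_ge_general q m s t F K hF hm hsm l hl
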